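/- arXiv:2502.05856 — 5 statements merged into one kernel-verified Lean document; each statement's English description precedes it below -/
import Mathlib

section
/- The pairing obtained by augmenting the one-dimensional intersection product satisfies Frobenius associativity: for all x, y, z ∈ EC_N, ⟨μ(x, y), z⟩ = ⟨x, μ(y, z)⟩. -/
/-- Basis elements of the one-dimensional enlarged complex of period `N`:
points `P a`, elemental sticks `S a` (the interval `[a, a+1]`), and
infinitesimal sticks `I a`. -/
inductive B (N : ℕ) : Type where
  | P : ZMod N → B N
  | S : ZMod N → B N
  | I : ZMod N → B N
  deriving DecidableEq

/-- The enlarged one-dimensional chain complex: the free ℚ-vector space on `B N`. -/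
abbrev EC (N : ℕ) : Type := B N →₀ ℚ

namespace B

variable {N : ℕ}

/-- Codimension: 1 for points, 0 for sticks and infinitesimal sticks. -/
def cod : B N → ℕ
  | P _ => 1
  | _ => 0

/-- Basis element viewed in `EC N`. -/
noncomputable def e (u : B N) : EC N := Finsupp.single u 1

/-- The transverse intersection product on basis elements. -/
noncomputable def muB : B N → B N → EC N
  | P _, P _ => 0
  | P a, S b => if b = a ∨ b = a - 1 then Finsupp.single (P a) (1/2) else 0
  | S b, P a => if b = a ∨ b = a - 1 then Finsupp.single (P a) (1/2) else 0
  | P a, I b => if b = a then Finsupp.single (P a) (1/4) else 0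
  | I b, P a => if b = a then Finsupp.single (P a) (1/4) else 0
  | S a, S b =>
      if b = a then
        Finsupp.single (I a) (-1) + Finsupp.single (S a) 1 + Finsupp.single (I (a+1)) (-1)
      else if b = a + 1 then Finsupp.single (I (a+1)) 1
      else if b = a - 1 then Finsupp.single (I a) 1
      else 0
  | S a, I b => if b = a ∨ b = a + 1 then Finsupp.single (I b) (1/2) else 0
  | I b, S a => if b = a ∨ b = a + 1 then Finsupp.single (I b) (1/2) else 0
  | I a, I b => if b = a then Finsupp.single (I a) (1/4) else 0

/-- Boundary on basis elements: `∂ (S a) = P (a+1) - P a`, zero otherwise. -/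
noncomputable def bdB : B N → EC N
  | S a => Finsupp.single (P (a+1)) 1 - Finsupp.single (P a) 1
  | _ => 0

/-- Augmentation on basis elements. -/
def epsB : B N → ℚ
  | P _ => 1
  | _ => 0

end B

/-- Bilinear extension of the basis product to `EC N`. -/
noncomputable def mu {N : ℕ} (x y : EC N) : EC N :=
  x.sum fun u cu => y.sum fun v cv => (cu * cv) • B.muB u v

/-- Linear extension of the boundary to `EC N`. -/
noncomputable def bd {N : ℕ} (x : EC N) : EC N := x.sum fun u cu => cu • B.bdB u

/-- Augmentation `ε : EC N → ℚ`. -/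
noncomputable def eps {N : ℕ} (x : EC N) : ℚ := x.sum fun u cu => cu * B.epsB u

/-- The augmentation pairing `⟨x, y⟩ = ε (μ x y)`. -/
noncomputable def pair {N : ℕ} (x y : EC N) : ℚ := eps (mu x y)

/-- The subcomplex `C_N` spanned by points and elemental sticks. -/
noncomputable def Csub (N : ℕ) : Submodule ℚ (EC N) :=
  Submodule.span ℚ
    (Set.range (fun a : ZMod N => Finsupp.single (B.P a) (1 : ℚ)) ∪
     Set.range (fun a : ZMod N => Finsupp.single (B.S a) (1 : ℚ)))

/-!
Multiplying by a point `P a` only rescales it: `μ(P a, x) = λₐ(x) • P a` for a linear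
form `λₐ` (`EC.weightAt a`), which vanishes on points. For `N ≥ 3` this form is a character
of `μ`, and the coefficient of `P a` in `μ(x, y)` is `πₐ(x) λₐ(y) + λₐ(x) πₐ(y)`, where
`πₐ(x)` is the coefficient of `P a` in `x`. Expanding both `μ(μ(x, y), z)` and
`μ(x, μ(y, z))` by these two rules gives the same coefficient of each `P a`, and `ε` is the
sum of these coefficients.
-/

lemma ZMod.natCast_ne_zero_of_pos_of_lt {k N : ℕ} (hk : 0 < k) (hkN : k < N) :
    (k : ZMod N) ≠ 0 := by
  rw [Ne, ZMod.natCast_eq_zero_iff]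
  exact Nat.not_dvd_of_pos_of_lt hk hkN

namespace B

variable {N : ℕ}

def weightAt (a : ZMod N) : B N → ℚ
  | P _ => 0
  | S b => if b = a ∨ b = a - 1 then 1/2 else 0
  | I b => if b = a then 1/4 else 0

lemma muB_apply_P (a : ZMod N) (u v : B N) :
    muB u v (P a) =
      Finsupp.single u 1 (P a) * weightAt a v + weightAt a u * Finsupp.single v 1 (P a) := by
  cases u <;> cases v <;> simp only [muB, weightAt] <;> (try split_ifs) <;>
    simp [Finsupp.single_apply] <;> grind

lemma linearCombination_weightAt_muB (hN : 3 ≤ N) (a : ZMod N) (u v : B N) :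
    Finsupp.linearCombination ℚ (weightAt a) (muB u v) = weightAt a u * weightAt a v := by
  -- these keep the indices `a - 1`, `a`, `a + 1` pairwise distinct
  have h1 : (1 : ZMod N) ≠ 0 := by
    exact_mod_cast ZMod.natCast_ne_zero_of_pos_of_lt one_pos (by omega)
  have h2 : (2 : ZMod N) ≠ 0 := by
    exact_mod_cast ZMod.natCast_ne_zero_of_pos_of_lt two_pos (by omega)
  cases u <;> cases v <;> simp only [muB, weightAt] <;> (try split_ifs) <;>
    simp [weightAt] <;> grind

end B

namespace EC

variable {N : ℕ}

lemma mu_single_single (u v : B N) (c d : ℚ) :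
    mu (Finsupp.single u c) (Finsupp.single v d) = (c * d) • B.muB u v := by
  simp [mu]

lemma mu_add_left (x x' y : EC N) : mu (x + x') y = mu x y + mu x' y := by
  unfold mu
  rw [Finsupp.sum_add_index] <;> simp [add_mul, add_smul]

lemma mu_add_right (x y y' : EC N) : mu x (y + y') = mu x y + mu x y' := by
  unfold mu
  rw [← Finsupp.sum_add]
  congr 1; ext u cu
  rw [Finsupp.sum_add_index] <;> simp [mul_add, add_smul]

lemma mu_smul_left (c : ℚ) (x y : EC N) : mu (c • x) y = c • mu x y := by
  unfold mu
  rw [Finsupp.sum_smul_index]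
  · simp [Finsupp.smul_sum, mul_assoc, mul_smul]
  · simp

lemma mu_smul_right (c : ℚ) (x y : EC N) : mu x (c • y) = c • mu x y := by
  unfold mu
  rw [Finsupp.smul_sum]
  congr 1; ext u cu
  rw [Finsupp.sum_smul_index]
  · simp [Finsupp.smul_sum, mul_smul, mul_left_comm]
  · simp

noncomputable def muₗ : EC N →ₗ[ℚ] EC N →ₗ[ℚ] EC N :=
  LinearMap.mk₂ ℚ mu mu_add_left mu_smul_left mu_add_right mu_smul_right

noncomputable def weightAt (a : ZMod N) : EC N →ₗ[ℚ] ℚ :=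
  Finsupp.linearCombination ℚ (B.weightAt a)

lemma weightAt_mu (hN : 3 ≤ N) (a : ZMod N) (x y : EC N) :
    weightAt a (mu x y) = weightAt a x * weightAt a y := by
  have h : muₗ.compr₂ (weightAt a) =
      (LinearMap.mul ℚ ℚ).compl₁₂ (weightAt a) (weightAt a) := by
    ext u v
    simp [muₗ, weightAt, mu_single_single, B.linearCombination_weightAt_muB hN]
  exact LinearMap.congr_fun₂ h x y

lemma mu_apply_P (a : ZMod N) (x y : EC N) :
    mu x y (B.P a) = x (B.P a) * weightAt a y + weightAt a x * y (B.P a) := by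
  let π : EC N →ₗ[ℚ] ℚ := Finsupp.lapply (B.P a)
  have h : muₗ.compr₂ π = (LinearMap.mul ℚ ℚ).compl₁₂ π (weightAt a) +
      (LinearMap.mul ℚ ℚ).compl₁₂ (weightAt a) π := by
    ext u v
    simp [π, muₗ, weightAt, mu_single_single, B.muB_apply_P]
  exact LinearMap.congr_fun₂ h x y

lemma eps_eq_sum [NeZero N] (x : EC N) : eps x = ∑ a, x (B.P a) := by
  have h : Finsupp.linearCombination ℚ B.epsB = ∑ a : ZMod N, Finsupp.lapply (B.P a) := by
    ext u
    cases u <;> simp [B.epsB, Finsupp.single_apply]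
  simpa [eps, Finsupp.linearCombination_apply, mul_comm] using LinearMap.congr_fun h x

end EC

/-- Frobenius associativity of the augmentation pairing. -/
theorem pair_frobenius (N : ℕ) (hN : 3 ≤ N) :
    ∀ x y z : EC N, pair (mu x y) z = pair x (mu y z) := by
  have : NeZero N := ⟨by omega⟩
  intro x y z
  simp only [pair, EC.eps_eq_sum, EC.mu_apply_P, EC.weightAt_mu hN]
  exact Finset.sum_congr rfl fun a _ => by ring
end

section
/- The product μ agrees with the geometric intersection of a stick and a point in general position: if a, c, b are integers with a < c < b and b − a < N, and X(a, b) = Σ_{i=a}^{b−1} S [i], then μ(X(a, b), P [c]) = P [c]. -/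
/-- The long stick `X(p,q) = Σ_{i=p}^{q-1} S [i]`. -/
noncomputable def X (N : ℕ) (p q : ℤ) : EC N :=
  ∑ i ∈ Finset.Ico p q, Finsupp.single (B.S ((i : ℤ) : ZMod N)) (1 : ℚ)

/-! Since `b - a < N`, reduction mod `N` is injective on the integers involved, so among the
sticks of `X(a, b)` exactly `S [c - 1]` and `S [c]` meet `P [c]`, each contributing `½ P [c]`. -/

lemma mu_finsetSum_left {N : ℕ} {ι : Type*} (s : Finset ι) (f : ι → EC N) (y : EC N) :
    mu (∑ i ∈ s, f i) y = ∑ i ∈ s, mu (f i) y := by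
  unfold mu
  exact (Finsupp.sum_finsetSum_index (fun _ => by simp) fun _ _ _ => by
    simp [add_mul, add_smul, Finsupp.sum_add]).symm

lemma mu_single_single {N : ℕ} (u v : B N) (r s : ℚ) :
    mu (Finsupp.single u r) (Finsupp.single v s) = (r * s) • B.muB u v := by
  unfold mu
  rw [Finsupp.sum_single_index, Finsupp.sum_single_index] <;> simp

lemma intCast_zmod_eq_intCast_iff_of_abs_lt {N : ℕ} {i j : ℤ} (h : |j - i| < N) :
    (i : ZMod N) = j ↔ i = j := by
  refine ⟨fun hij => ?_, congrArg _⟩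
  have hdvd := (ZMod.intCast_eq_intCast_iff_dvd_sub i j N).1 hij
  exact (sub_eq_zero.1 (Int.eq_zero_of_abs_lt_dvd hdvd h)).symm

lemma mu_stick_point_of_window {N : ℕ} {i c : ℤ} (hlo : c - N < i) (hhi : i + 1 < c + N) :
    mu (Finsupp.single (B.S (i : ZMod N)) 1) (Finsupp.single (B.P (c : ZMod N)) 1)
      = if i = c ∨ i = c - 1 then Finsupp.single (B.P (c : ZMod N)) (1 / 2 : ℚ) else 0 := by
  have hc : (i : ZMod N) = c ↔ i = c :=
    intCast_zmod_eq_intCast_iff_of_abs_lt (by rw [abs_lt]; omega)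
  have hc' : (i : ZMod N) = (c : ZMod N) - 1 ↔ i = c - 1 := by
    rw [← Int.cast_one, ← Int.cast_sub]
    exact intCast_zmod_eq_intCast_iff_of_abs_lt (by rw [abs_lt]; omega)
  rw [mu_single_single, one_mul, one_smul]
  simp only [B.muB, hc, hc']

theorem mu_stick_point_general_position_general (N : ℕ) :
    ∀ a c b : ℤ, a < c → c < b → b - a < (N : ℤ) →
      mu (X N a b) (Finsupp.single (B.P ((c : ℤ) : ZMod N)) (1 : ℚ))
        = Finsupp.single (B.P ((c : ℤ) : ZMod N)) (1 : ℚ) := by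
  intro a c b hac hcb hba
  have hterm : ∀ i ∈ Finset.Ico a b,
      mu (Finsupp.single (B.S (i : ZMod N)) 1) (Finsupp.single (B.P (c : ZMod N)) 1)
        = if i = c ∨ i = c - 1 then Finsupp.single (B.P (c : ZMod N)) (1 / 2 : ℚ) else 0 := by
    intro i hi
    rw [Finset.mem_Ico] at hi
    exact mu_stick_point_of_window (by omega) (by omega)
  have hmeet : (Finset.Ico a b).filter (fun i => i = c ∨ i = c - 1) = {c - 1, c} := by
    ext i
    simp only [Finset.mem_filter, Finset.mem_Ico, Finset.mem_insert, Finset.mem_singleton]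
    omega
  rw [X, mu_finsetSum_left, Finset.sum_congr rfl hterm, ← Finset.sum_filter, hmeet,
    Finset.sum_pair (by omega), ← Finsupp.single_add]
  norm_num

/-- the product of a long stick and an interior point in general position
is the point. -/
theorem mu_stick_point_general_position (N : ℕ) (hN : 3 ≤ N) :
    ∀ a c b : ℤ, a < c → c < b → b - a < (N : ℤ) →
      mu (X N a b) (Finsupp.single (B.P ((c : ℤ) : ZMod N)) (1 : ℚ))
        = Finsupp.single (B.P ((c : ℤ) : ZMod N)) (1 : ℚ) :=
  mu_stick_point_general_position_general N
end

section
/- The crumbling map commutes with the boundary and the intersection product: for every k ≥ 1, the ℚ-linear map ι : EC_N → EC_{N·k} defined on basis elements by ι(P a) = P (ρ a), ι(I a) = I (ρ a), ι(S a) = Σ_{j=0}^{k−1} S (ρ a + j), where ρ : ZMod N → ZMod (N·k) is the well-defined map [a] ↦ [k·a], satisfies ι(∂x) = ∂(ι x) and ι(μ(x, y)) = μ(ι x, ι y) for all x, y ∈ EC_N. -/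
/-- The well-defined map `ZMod N → ZMod (N·k)`, `[a] ↦ [k·a]`. -/
def rho (N k : ℕ) (a : ZMod N) : ZMod (N * k) := ((k * a.val : ℕ) : ZMod (N * k))

/-- Crumbling on basis elements: points and infinitesimal sticks map to their images,
an elemental stick crumbles into `k` elemental sticks. -/
noncomputable def iotaB (N k : ℕ) : B N → EC (N * k)
  | .P a => Finsupp.single (.P (rho N k a)) 1
  | .I a => Finsupp.single (.I (rho N k a)) 1
  | .S a => ∑ j ∈ Finset.range k, Finsupp.single (.S (rho N k a + (j : ZMod (N * k)))) 1

/-- The crumbling chain map `EC N → EC (N·k)`. -/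
noncomputable def iota (N k : ℕ) (x : EC N) : EC (N * k) :=
  x.sum fun u cu => cu • iotaB N k u

/-!
Both `∂` and `μ` are local in coordinates: the coefficient of `μ x y` at a stick is the product
of the coefficients of `x` and `y` there, and at a point or infinitesimal stick `p` it involves
only the coefficients at `p`, at the two sticks adjacent to `p`, and the product
`(∂x)_p (∂y)_p` of boundary coefficients (this needs period at least `3`, so that `a - 1`,
`a` and `a + 1` are distinct).

Every `t : ZMod (N * k)` is uniquely `ρ a + j` with `j < k`. The coefficient of `ι x` at `S t`
is that of `x` at `S a`, and at `P t`, `I t` it is that of `x` at `P a`, `I a` if `j = 0` and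
zero otherwise. At a block start `ρ a` the two adjacent sticks are crumbs of `S (a - 1)` and
`S a`, so the local formulas on both sides agree. At an interior point both adjacent sticks
are crumbs of the same `S a`, so the boundary coefficient of `ι x` vanishes there; as `ι x` has
no point or infinitesimal stick there either, both sides vanish.
-/

open B Finsupp

section Coordinates

variable {M : ℕ}

theorem bd_apply_P (x : EC M) (p : ZMod M) : bd x (P p) = x (S (p - 1)) - x (S p) := by
  have hbdB (u : B M) :
      bdB u (P p) = (if u = S (p - 1) then 1 else 0) - if u = S p then 1 else 0 := by
    cases u <;> simp [bdB, single_apply, eq_sub_iff_add_eq]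
  simp only [bd, Finsupp.sum_apply, Finsupp.smul_apply, smul_eq_mul, hbdB, mul_sub, mul_ite,
    mul_one, mul_zero, sum_sub, sum_ite_self_eq']

theorem bd_apply_S (x : EC M) (t : ZMod M) : bd x (S t) = 0 := by
  have hbdB (u : B M) : bdB u (S t) = 0 := by cases u <;> simp [bdB]
  simp [bd, Finsupp.sum_apply, hbdB]

theorem bd_apply_I (x : EC M) (p : ZMod M) : bd x (I p) = 0 := by
  have hbdB (u : B M) : bdB u (I p) = 0 := by cases u <;> simp [bdB]
  simp [bd, Finsupp.sum_apply, hbdB]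

theorem mu_eq_linearCombination (x y : EC M) :
    mu x y = linearCombination ℚ (fun u => linearCombination ℚ (muB u)) x y := by
  simp [mu, linearCombination_apply, Finsupp.sum, LinearMap.sum_apply, Finset.smul_sum, mul_smul]

theorem mu_single_single_s9 (u v : B M) (c d : ℚ) :
    mu (single u c) (single v d) = (c * d) • muB u v := by
  simp [mu_eq_linearCombination, mul_smul]

theorem mu_add_left (x x' y : EC M) : mu (x + x') y = mu x y + mu x' y := by
  simp only [mu_eq_linearCombination, map_add, LinearMap.add_apply]

theorem mu_add_right (x y y' : EC M) : mu x (y + y') = mu x y + mu x y' := by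
  simp only [mu_eq_linearCombination, map_add]

noncomputable def muCoeff (x y : EC M) : B M → ℚ
  | P p => (x (P p) * (y (S (p - 1)) + y (S p)) + (x (S (p - 1)) + x (S p)) * y (P p)) / 2
      + (x (P p) * y (I p) + x (I p) * y (P p)) / 4
  | S t => x (S t) * y (S t)
  | I p => (x (I p) * (y (S (p - 1)) + y (S p)) + (x (S (p - 1)) + x (S p)) * y (I p)) / 2
      + x (I p) * y (I p) / 4 - bd x (P p) * bd y (P p)

theorem muCoeff_single_single (hM : 3 ≤ M) (u v : B M) (c d : ℚ) (w : B M) :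
    muCoeff (single u c) (single v d) w = c * d * muB u v w := by
  have hone : (1 : ZMod M) ≠ 0 := by
    have : Fact (1 < M) := ⟨by omega⟩
    exact one_ne_zero
  have htwo : (2 : ZMod M) ≠ 0 := by
    rw [← Nat.cast_ofNat, ne_eq, ZMod.natCast_eq_zero_iff]
    exact fun h => absurd (Nat.le_of_dvd two_pos h) (by omega)
  cases u <;> cases v <;> simp only [muB] <;> (try split_ifs) <;> cases w <;>
    simp [muCoeff, bd_apply_P, single_apply] <;> grind

theorem mu_apply (hM : 3 ≤ M) (x y : EC M) (w : B M) : mu x y w = muCoeff x y w := by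
  induction x using Finsupp.induction_linear with
  | zero => cases w <;> simp [muCoeff, mu_eq_linearCombination, bd_apply_P]
  | add x x' hx hx' =>
    rw [mu_add_left, Finsupp.add_apply, hx, hx']
    cases w <;> simp only [muCoeff, bd_apply_P, Finsupp.add_apply] <;> ring
  | single u c =>
    induction y using Finsupp.induction_linear with
    | zero => cases w <;> simp [muCoeff, mu_eq_linearCombination, bd_apply_P]
    | add y y' hy hy' =>
      rw [mu_add_right, Finsupp.add_apply, hy, hy']
      cases w <;> simp only [muCoeff, bd_apply_P, Finsupp.add_apply] <;> ring
    | single v d =>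
      rw [mu_single_single_s9, Finsupp.smul_apply, smul_eq_mul, muCoeff_single_single hM]

end Coordinates

section Crumbling

variable {N k : ℕ}

theorem iota_apply (x : EC N) (w : B (N * k)) :
    iota N k x w = x.sum fun u c => c * iotaB N k u w := by
  simp [iota, Finsupp.sum_apply]

theorem rho_natCast (m : ℕ) : rho N k m = ((k * m : ℕ) : ZMod (N * k)) := by
  rw [rho, ZMod.natCast_eq_natCast_iff', ZMod.val_natCast, mul_comm N k, Nat.mul_mod_mul_left,
    Nat.mul_mod_mul_left, Nat.mod_mod]

theorem rho_add_one [NeZero N] (a : ZMod N) : rho N k (a + 1) = rho N k a + k := by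
  rw [← ZMod.natCast_zmod_val a, ← Nat.cast_succ, rho_natCast, rho_natCast]
  push_cast
  ring

-- The stick `S t` of period `N * k` is the `offsetOf t`-th crumb of `S (blockOf t)`.
def blockOf (t : ZMod (N * k)) : ZMod N := (t.val / k : ℕ)

def offsetOf (t : ZMod (N * k)) : ℕ := t.val % k

variable [NeZero k]

theorem offsetOf_lt (t : ZMod (N * k)) : offsetOf t < k := Nat.mod_lt _ (NeZero.pos k)

variable [NeZero N]

theorem rho_blockOf_add_offsetOf (t : ZMod (N * k)) : rho N k (blockOf t) + offsetOf t = t := by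
  rw [blockOf, offsetOf, rho_natCast, ← Nat.cast_add, Nat.div_add_mod, ZMod.natCast_zmod_val]

theorem rho_add_eq_iff {a : ZMod N} {j : ℕ} (hj : j < k) {t : ZMod (N * k)} :
    rho N k a + j = t ↔ blockOf t = a ∧ offsetOf t = j := by
  constructor
  · rintro rfl
    have hval : (rho N k a + j).val = k * a.val + j := by
      have hlt : k * a.val + j < N * k := by nlinarith [ZMod.val_lt a]
      rw [rho, ← Nat.cast_add, ZMod.val_natCast, Nat.mod_eq_of_lt hlt]
    rw [blockOf, offsetOf, hval, Nat.mul_add_div (NeZero.pos k), Nat.div_eq_of_lt hj,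
      Nat.mul_add_mod, Nat.mod_eq_of_lt hj, add_zero, ZMod.natCast_zmod_val]
    exact ⟨rfl, rfl⟩
  · rintro ⟨rfl, rfl⟩
    exact rho_blockOf_add_offsetOf t

theorem rho_eq_iff {a : ZMod N} {t : ZMod (N * k)} :
    rho N k a = t ↔ blockOf t = a ∧ offsetOf t = 0 := by
  simpa using rho_add_eq_iff (a := a) (t := t) (NeZero.pos k)

theorem blockOf_sub_one (t : ZMod (N * k)) :
    blockOf (t - 1) = if offsetOf t = 0 then blockOf t - 1 else blockOf t := by
  split_ifs with h
  · refine ((rho_add_eq_iff (Nat.sub_lt (NeZero.pos k) one_pos)).mp ?_).1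
    have hprev := rho_add_one (k := k) (blockOf t - 1)
    rw [sub_add_cancel] at hprev
    conv_rhs => rw [← rho_blockOf_add_offsetOf t, h, hprev]
    rw [Nat.cast_pred (NeZero.pos k)]
    ring
  · refine ((rho_add_eq_iff ((Nat.sub_le _ 1).trans_lt (offsetOf_lt t))).mp ?_).1
    rw [Nat.cast_pred (Nat.pos_of_ne_zero h)]
    conv_rhs => rw [← rho_blockOf_add_offsetOf t]
    ring

theorem iotaB_apply_S (u : B N) (t : ZMod (N * k)) :
    iotaB N k u (S t) = if u = S (blockOf t) then 1 else 0 := by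
  cases u with
  | P a => simp [iotaB]
  | I a => simp [iotaB]
  | S a =>
    simp only [iotaB, finsetSum_apply, single_apply, S.injEq]
    rw [Finset.sum_congr rfl fun j hj => if_congr (rho_add_eq_iff (Finset.mem_range.mp hj)) rfl rfl]
    simp [ite_and, eq_comm, offsetOf_lt]

theorem iotaB_apply_P (u : B N) (q : ZMod (N * k)) :
    iotaB N k u (P q) = if offsetOf q = 0 ∧ u = P (blockOf q) then 1 else 0 := by
  cases u with
  | P a =>
    have := rho_eq_iff (a := a) (t := q)
    simp only [iotaB, single_apply, P.injEq]
    split_ifs <;> grind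
  | I a => simp [iotaB]
  | S a => simp [iotaB, finsetSum_apply]

theorem iotaB_apply_I (u : B N) (q : ZMod (N * k)) :
    iotaB N k u (I q) = if offsetOf q = 0 ∧ u = I (blockOf q) then 1 else 0 := by
  cases u with
  | P a => simp [iotaB]
  | I a =>
    have := rho_eq_iff (a := a) (t := q)
    simp only [iotaB, single_apply, I.injEq]
    split_ifs <;> grind
  | S a => simp [iotaB, finsetSum_apply]

theorem iota_apply_S (x : EC N) (t : ZMod (N * k)) : iota N k x (S t) = x (S (blockOf t)) := by
  simp only [iota_apply, iotaB_apply_S, mul_ite, mul_one, mul_zero]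
  exact sum_ite_self_eq' x _

theorem iota_apply_P (x : EC N) (q : ZMod (N * k)) :
    iota N k x (P q) = if offsetOf q = 0 then x (P (blockOf q)) else 0 := by
  simp only [iota_apply, iotaB_apply_P, mul_ite, mul_one, mul_zero]
  split_ifs with h
  · simp only [h, true_and]
    exact sum_ite_self_eq' x _
  · simp [h]

theorem iota_apply_I (x : EC N) (q : ZMod (N * k)) :
    iota N k x (I q) = if offsetOf q = 0 then x (I (blockOf q)) else 0 := by
  simp only [iota_apply, iotaB_apply_I, mul_ite, mul_one, mul_zero]
  split_ifs with h
  · simp only [h, true_and]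
    exact sum_ite_self_eq' x _
  · simp [h]

end Crumbling

/-- the crumbling map commutes with the boundary operator and with the
intersection product. -/
theorem iota_comm_bd_mu (N : ℕ) (hN : 3 ≤ N) (k : ℕ) (hk : 1 ≤ k) :
    (∀ x : EC N, iota N k (bd x) = bd (iota N k x)) ∧
    (∀ x y : EC N, iota N k (mu x y) = mu (iota N k x) (iota N k y)) := by
  have : NeZero N := ⟨by omega⟩
  have : NeZero k := ⟨by omega⟩
  have hNk : 3 ≤ N * k := hN.trans (Nat.le_mul_of_pos_right N hk)
  refine ⟨fun x => ?_, fun x y => ?_⟩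
  · ext (q | t | q)
    · simp only [iota_apply_P, bd_apply_P, iota_apply_S, blockOf_sub_one]
      split_ifs <;> simp
    · simp only [iota_apply_S, bd_apply_S]
    · simp only [iota_apply_I, bd_apply_I, ite_self]
  · ext (q | t | q)
    all_goals
      simp only [mu_apply hN, mu_apply hNk, muCoeff, iota_apply_P, iota_apply_S, iota_apply_I,
        bd_apply_P, blockOf_sub_one]
    all_goals split_ifs <;> simp
end

section
/- If the period N is odd (and N ≥ 3), the three-dimensional augmentation pairing is non-degenerate on the cubical subcomplex C3_N: for every x ∈ C3_N, if ⟨x, y⟩₃ = 0 for all y ∈ C3_N, then x = 0. -/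
/-- Basis triples for the three-dimensional complex. -/
abbrev B3 (N : ℕ) : Type := B N × B N × B N

/-- The enlarged three-dimensional chain complex: free ℚ-vector space on `B3 N`. -/
abbrev E3 (N : ℕ) : Type := B3 N →₀ ℚ

/-- Codimension of a basis triple. -/
def cod3 {N : ℕ} (u : B3 N) : ℕ := u.1.cod + u.2.1.cod + u.2.2.cod

/-- Basis triple viewed in `E3 N`. -/
noncomputable def e3 {N : ℕ} (u : B3 N) : E3 N := Finsupp.single u 1

/-- Trilinear map `EC N → EC N → EC N → E3 N`, `x ⊗ y ⊗ z`. -/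
noncomputable def t3 {N : ℕ} (x y z : EC N) : E3 N :=
  x.sum fun u₁ c₁ => y.sum fun u₂ c₂ => z.sum fun u₃ c₃ =>
    Finsupp.single (u₁, u₂, u₃) (c₁ * c₂ * c₃)

/-- The three-dimensional intersection product on basis triples, with Koszul sign. -/
noncomputable def mu3B {N : ℕ} (u v : B3 N) : E3 N :=
  ((-1 : ℚ) ^ (u.2.1.cod * v.1.cod + u.2.2.cod * v.1.cod + u.2.2.cod * v.2.1.cod)) •
    t3 (B.muB u.1 v.1) (B.muB u.2.1 v.2.1) (B.muB u.2.2 v.2.2)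

/-- Bilinear extension of the three-dimensional product to `E3 N`. -/
noncomputable def mu3 {N : ℕ} (x y : E3 N) : E3 N :=
  x.sum fun u cu => y.sum fun v cv => (cu * cv) • mu3B u v

/-- The three-dimensional boundary on basis triples. -/
noncomputable def bd3B {N : ℕ} (u : B3 N) : E3 N :=
  t3 (B.bdB u.1) (B.e u.2.1) (B.e u.2.2)
    + ((-1 : ℚ) ^ u.1.cod) • t3 (B.e u.1) (B.bdB u.2.1) (B.e u.2.2)
    + ((-1 : ℚ) ^ (u.1.cod + u.2.1.cod)) • t3 (B.e u.1) (B.e u.2.1) (B.bdB u.2.2)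

/-- Linear extension of the three-dimensional boundary to `E3 N`. -/
noncomputable def bd3 {N : ℕ} (x : E3 N) : E3 N := x.sum fun u cu => cu • bd3B u

/-- The three-dimensional augmentation `ε₃`. -/
noncomputable def eps3 {N : ℕ} (x : E3 N) : ℚ :=
  x.sum fun u cu => cu * (B.epsB u.1 * B.epsB u.2.1 * B.epsB u.2.2)

/-- The three-dimensional augmentation pairing. -/
noncomputable def pair3 {N : ℕ} (x y : E3 N) : ℚ := eps3 (mu3 x y)

/-- Is a basis element an infinitesimal stick? -/
def isI {N : ℕ} : B N → Bool
  | .I _ => true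
  | _ => false

/-- Is a basis element a point? -/
def isP {N : ℕ} : B N → Bool
  | .P _ => true
  | _ => false

/-- Number of infinitesimal components of a basis triple. -/
def nI {N : ℕ} (u : B3 N) : ℕ :=
  (if isI u.1 then 1 else 0) + (if isI u.2.1 then 1 else 0) + (if isI u.2.2 then 1 else 0)

/-- Number of point components of a basis triple. -/
def nP {N : ℕ} (u : B3 N) : ℕ :=
  (if isP u.1 then 1 else 0) + (if isP u.2.1 then 1 else 0) + (if isP u.2.2 then 1 else 0)

/-- Membership of a basis triple in the generating set of `FC_N`: either no infinitesimal
component and at least one point component, or exactly one infinitesimal component and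
two point components. -/
def inFC {N : ℕ} (u : B3 N) : Prop := (nI u = 0 ∧ 1 ≤ nP u) ∨ (nI u = 1 ∧ nP u = 2)

/-- The subcomplex `FC_N` of `E3 N`. -/
noncomputable def FCsub (N : ℕ) : Submodule ℚ (E3 N) :=
  Submodule.span ℚ {x : E3 N | ∃ u : B3 N, inFC u ∧ x = e3 u}

/-- A basis triple has no infinitesimal component. -/
def noInf {N : ℕ} (u : B3 N) : Prop := nI u = 0

/-- The three-dimensional cubical subcomplex `C3_N` of `E3 N`. -/
noncomputable def C3sub (N : ℕ) : Submodule ℚ (E3 N) :=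
  Submodule.span ℚ {x : E3 N | ∃ u : B3 N, noInf u ∧ x = e3 u}

/-!
On triples without infinitesimal components, `ε₃ (μ₃ w v)` is, up to a sign depending only on `w`,
the product of the one-dimensional values `ε (μ wᵢ vᵢ)`. The one-dimensional pairing only pairs
points with sticks, via the matrix `(1 + T) / 2` of the cyclic shift `T`, which is invertible for
odd `N`. Its inverse gives an explicit dual basis of `C_N`, and the tensor cube of that dual basis
lies in `C3_N` and detects each coefficient of `x` up to sign.
-/

open Finsupp

section Augmentation

variable {N : ℕ}

theorem eps_eq_linearCombination (x : EC N) : eps x = linearCombination ℚ B.epsB x := by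
  rw [linearCombination_apply]
  rfl

theorem eps3_eq_linearCombination (x : E3 N) :
    eps3 x = linearCombination ℚ (fun u : B3 N => B.epsB u.1 * B.epsB u.2.1 * B.epsB u.2.2) x := by
  rw [linearCombination_apply]
  rfl

theorem linearCombination_t3 (f g h : B N → ℚ) (x y z : EC N) :
    linearCombination ℚ (fun u : B3 N => f u.1 * g u.2.1 * h u.2.2) (t3 x y z) =
      linearCombination ℚ f x * linearCombination ℚ g y * linearCombination ℚ h z := by
  simp only [t3, map_finsuppSum, linearCombination_single]
  rw [mul_assoc]
  simp_rw [linearCombination_apply, Finsupp.sum_mul, Finsupp.mul_sum, smul_eq_mul]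
  refine Finsupp.sum_congr fun _ _ => Finsupp.sum_congr fun _ _ => Finsupp.sum_congr fun _ _ => ?_
  ring

theorem eps3_t3 (x y z : EC N) : eps3 (t3 x y z) = eps x * eps y * eps z := by
  simp only [eps3_eq_linearCombination, eps_eq_linearCombination, linearCombination_t3]

theorem pair3_eq_linearCombination (x y : E3 N) :
    pair3 x y =
      linearCombination ℚ (fun w => linearCombination ℚ (fun v => eps3 (mu3B w v)) y) x := by
  simp only [pair3, mu3, eps3_eq_linearCombination, map_finsuppSum, map_smul,
    linearCombination_apply, smul_eq_mul, Finsupp.mul_sum]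
  refine Finsupp.sum_congr fun _ _ => Finsupp.sum_congr fun _ _ => Finsupp.sum_congr fun _ _ => ?_
  ring

end Augmentation

namespace B

variable {N : ℕ}

noncomputable def pairB (u v : B N) : ℚ := eps (muB u v)

theorem pairB_P_P (a b : ZMod N) : pairB (P a) (P b) = 0 := by
  simp [pairB, muB, eps_eq_linearCombination]

theorem pairB_S_S (a b : ZMod N) : pairB (S a) (S b) = 0 := by
  simp only [pairB, muB]
  split_ifs <;> simp [eps_eq_linearCombination, epsB]

theorem pairB_P_S (a b : ZMod N) : pairB (P a) (S b) = if b = a ∨ b = a - 1 then 1 / 2 else 0 := by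
  simp only [pairB, muB]
  split_ifs <;> simp [eps_eq_linearCombination, epsB]

theorem pairB_S_P (a b : ZMod N) : pairB (S a) (P b) = if b = a ∨ b = a + 1 then 1 / 2 else 0 := by
  simp only [pairB, muB, eq_comm (a := a), sub_eq_iff_eq_add]
  split_ifs <;> simp [eps_eq_linearCombination, epsB]

theorem cod_eq_of_pairB_ne_zero {u v : B N} (h : pairB u v ≠ 0) : v.cod = 1 - u.cod := by
  cases u <;> cases v <;> simp only [pairB, muB] at h <;> (try split_ifs at h) <;>
    simp_all [eps_eq_linearCombination, epsB, cod]

end B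

section KoszulSign

variable {N : ℕ}

/-- The Koszul sign of `mu3B w v` when every `v.i` has the complementary codimension
`1 - w.i.cod`, the only case in which `ε₃ (mu3B w v)` can be nonzero. -/
def dualSign (w : B3 N) : ℚ :=
  (-1) ^ (w.2.1.cod * (1 - w.1.cod) + w.2.2.cod * (1 - w.1.cod) + w.2.2.cod * (1 - w.2.1.cod))

theorem dualSign_ne_zero (w : B3 N) : dualSign w ≠ 0 :=
  pow_ne_zero _ (by norm_num)

theorem eps3_mu3B (w v : B3 N) :
    eps3 (mu3B w v) = dualSign w * (w.1.pairB v.1 * w.2.1.pairB v.2.1 * w.2.2.pairB v.2.2) := by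
  rw [mu3B, eps3_eq_linearCombination, map_smul, ← eps3_eq_linearCombination, eps3_t3, smul_eq_mul]
  change (-1 : ℚ) ^ _ * (w.1.pairB v.1 * w.2.1.pairB v.2.1 * w.2.2.pairB v.2.2) = _
  by_cases h : w.1.pairB v.1 * w.2.1.pairB v.2.1 * w.2.2.pairB v.2.2 = 0
  · rw [h, mul_zero, mul_zero]
  · obtain ⟨⟨h₁, h₂⟩, h₃⟩ := mul_ne_zero_iff.mp h |>.imp_left mul_ne_zero_iff.mp
    rw [B.cod_eq_of_pairB_ne_zero h₁, B.cod_eq_of_pairB_ne_zero h₂, dualSign]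

end KoszulSign

section CubicalSubcomplex

variable {N : ℕ}

theorem C3sub_eq_supported : C3sub N = supported ℚ ℚ {w : B3 N | noInf w} := by
  rw [supported_eq_span_single]
  simp only [C3sub, e3, Set.image, Set.mem_ofPred_eq, eq_comm]

theorem noInf_iff {w : B3 N} :
    noInf w ↔ isI w.1 = false ∧ isI w.2.1 = false ∧ isI w.2.2 = false := by
  obtain ⟨a, b, c⟩ := w
  cases ha : isI a <;> cases hb : isI b <;> cases hc : isI c <;> simp [noInf, nI, ha, hb, hc]

theorem setOf_noInf :
    {w : B3 N | noInf w} = {u | isI u = false} ×ˢ {u | isI u = false} ×ˢ {u | isI u = false} :=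
  Set.ext fun _ => noInf_iff

theorem t3_mem_supported {s₁ s₂ s₃ : Set (B N)} {x y z : EC N} (hx : x ∈ supported ℚ ℚ s₁)
    (hy : y ∈ supported ℚ ℚ s₂) (hz : z ∈ supported ℚ ℚ s₃) :
    t3 x y z ∈ supported ℚ ℚ (s₁ ×ˢ s₂ ×ˢ s₃) :=
  Submodule.finsuppSum_mem _ _ _ _ fun _ ha => Submodule.finsuppSum_mem _ _ _ _ fun _ hb =>
    Submodule.finsuppSum_mem _ _ _ _ fun _ hc =>
      single_mem_supported ℚ _
        ⟨hx (mem_support_iff.mpr ha), hy (mem_support_iff.mpr hb), hz (mem_support_iff.mpr hc)⟩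

end CubicalSubcomplex

theorem neg_one_pow_val_add_neg_one_pow_val_sub_one {N : ℕ} (hodd : Odd N) (k : ZMod N) :
    (-1 : ℚ) ^ k.val + (-1) ^ (k - 1).val = if k = 0 then 2 else 0 := by
  obtain ⟨m, rfl⟩ := hodd
  split_ifs with hk
  · rw [hk, zero_sub, ZMod.val_zero, ZMod.val_neg_one (2 * m), pow_mul]
    norm_num
  · have hpos : 0 < k.val := ZMod.val_pos.mpr hk
    have hone : (1 : ZMod (2 * m + 1)).val = 1 := by
      rw [ZMod.val_one_eq_one_mod, Nat.one_mod_eq_one]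
      have := ZMod.val_lt k
      omega
    obtain ⟨j, hj⟩ := Nat.exists_eq_add_of_lt hpos
    rw [ZMod.val_sub (hone.trans_le hpos), hone, hj]
    simp [pow_succ]

theorem Fintype.sum_ite_eq_or_eq {α M : Type*} [Fintype α] [DecidableEq α] [AddCommMonoid M]
    {a b : α} (hab : a ≠ b) (f : α → M) :
    ∑ c, (if c = a ∨ c = b then f c else 0) = f a + f b := by
  rw [← Finset.sum_pair hab, ← Finset.sum_filter]
  congr 1
  ext
  simp

namespace B

variable {N : ℕ}

/-- The dual basis of `C_N` for `pairB`. It inverts the matrix `(1 + T) / 2` of the cyclic shift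
`T`: since `T ^ N = 1` with `N` odd, `(1 + T) * ∑ k < N, (-1) ^ k * T ^ k = 2`. -/
noncomputable def dual [NeZero N] : B N → EC N
  | P a => ∑ c, single (S c) ((-1) ^ (c - a).val)
  | S a => ∑ c, single (P c) ((-1) ^ (a - c).val)
  | I _ => 0

theorem dual_mem_supported [NeZero N] (u : B N) : u.dual ∈ supported ℚ ℚ {v | isI v = false} := by
  cases u with
  | I _ => exact zero_mem _
  | _ => exact Submodule.sum_mem _ fun _ _ => single_mem_supported ℚ _ rfl

theorem linearCombination_pairB_dual [NeZero N] [Fact (1 < N)] (hodd : Odd N) {u w : B N}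
    (hu : isI u = false) (hw : isI w = false) :
    linearCombination ℚ w.pairB u.dual = if w = u then 1 else 0 := by
  have key := neg_one_pow_val_add_neg_one_pow_val_sub_one hodd
  cases u <;> cases w <;> simp only [isI, Bool.true_eq_false] at hu hw <;>
    simp only [dual, map_sum, linearCombination_single, smul_eq_mul, pairB_P_P, pairB_S_S,
      pairB_P_S, pairB_S_P, mul_zero, Finset.sum_const_zero, mul_ite, reduceCtorEq, if_false]
  case P.P a b =>
    rw [Fintype.sum_ite_eq_or_eq (by simp [eq_comm (a := b)]), sub_right_comm, ← add_mul, key]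
    simp [sub_eq_zero]
  case S.S a b =>
    rw [Fintype.sum_ite_eq_or_eq (by simp), sub_add_eq_sub_sub, ← add_mul, key]
    simp [sub_eq_zero, eq_comm]

end B

section Duality

variable {N : ℕ}

noncomputable def dual3 [NeZero N] (u : B3 N) : E3 N := t3 u.1.dual u.2.1.dual u.2.2.dual

theorem dual3_mem_C3sub [NeZero N] (u : B3 N) : dual3 u ∈ C3sub N := by
  rw [C3sub_eq_supported, setOf_noInf]
  exact t3_mem_supported (B.dual_mem_supported _) (B.dual_mem_supported _) (B.dual_mem_supported _)

theorem linearCombination_eps3_mu3B_dual3 [NeZero N] [Fact (1 < N)] (hodd : Odd N) {u w : B3 N}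
    (hu : noInf u) (hw : noInf w) :
    linearCombination ℚ (fun v => eps3 (mu3B w v)) (dual3 u) =
      if w = u then dualSign w else 0 := by
  obtain ⟨hu₁, hu₂, hu₃⟩ := noInf_iff.mp hu
  obtain ⟨hw₁, hw₂, hw₃⟩ := noInf_iff.mp hw
  have hfactor : (fun v => eps3 (mu3B w v)) = LinearMap.mulLeft ℚ (dualSign w) ∘
      fun v : B3 N => w.1.pairB v.1 * w.2.1.pairB v.2.1 * w.2.2.pairB v.2.2 :=
    funext (eps3_mu3B w)
  rw [hfactor, ← apply_linearCombination, LinearMap.mulLeft_apply, dual3, linearCombination_t3,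
    B.linearCombination_pairB_dual hodd hu₁ hw₁, B.linearCombination_pairB_dual hodd hu₂ hw₂,
    B.linearCombination_pairB_dual hodd hu₃ hw₃]
  simp only [Prod.ext_iff]
  split_ifs <;> simp_all

theorem pair3_dual3 [NeZero N] [Fact (1 < N)] (hodd : Odd N) {x : E3 N} (hx : x ∈ C3sub N)
    {u : B3 N} (hu : noInf u) : pair3 x (dual3 u) = x u * dualSign u := by
  rw [C3sub_eq_supported] at hx
  rw [pair3_eq_linearCombination, linearCombination_apply]
  calc
    (x.sum fun w a => a • linearCombination ℚ (fun v => eps3 (mu3B w v)) (dual3 u)) =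
        x.sum fun w a => (if w = u then a else 0) * dualSign u := by
      refine Finsupp.sum_congr fun w hw => ?_
      rw [linearCombination_eps3_mu3B_dual3 hodd hu (hx hw)]
      split_ifs with h <;> simp [h]
    _ = x u * dualSign u := by rw [← Finsupp.sum_mul, Finsupp.sum_ite_self_eq']

end Duality

/-- for odd period, the three-dimensional augmentation pairing is
non-degenerate on the cubical subcomplex `C3_N`. -/
theorem pair3_nondegenerate (N : ℕ) (hN : 3 ≤ N) (hodd : Odd N) :
    ∀ x ∈ C3sub N, (∀ y ∈ C3sub N, pair3 x y = 0) → x = 0 := by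
  have : NeZero N := ⟨by omega⟩
  have : Fact (1 < N) := ⟨by omega⟩
  intro x hx hpair
  ext u
  by_cases hu : noInf u
  · have h := hpair (dual3 u) (dual3_mem_C3sub u)
    rw [pair3_dual3 hodd hx hu] at h
    exact (mul_eq_zero.mp h).resolve_right (dualSign_ne_zero u)
  · rw [C3sub_eq_supported, mem_supported'] at hx
    exact hx u hu
end

section
/- On the subcomplex FC_N, the Leibniz product rule holds without reservation: for all basis triples u, v each of which either has no infinitesimal component and at least one point component, or has exactly one infinitesimal component and two point components, ∂₃(μ₃(u, v)) = μ₃(∂₃ u, v) + (−1)^(c(u)) μ₃(u, ∂₃ v). -/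
section Leibniz

open Finsupp B

variable {N : ℕ}

noncomputable def bdL : EC N →ₗ[ℚ] EC N := linearCombination ℚ bdB

noncomputable def muL : EC N →ₗ[ℚ] EC N →ₗ[ℚ] EC N :=
  linearCombination ℚ fun a => linearCombination ℚ (muB a)

noncomputable def gradeInv : EC N →ₗ[ℚ] EC N :=
  linearCombination ℚ fun a => (-1 : ℚ) ^ a.cod • e a

noncomputable def tensor3 : EC N →ₗ[ℚ] EC N →ₗ[ℚ] EC N →ₗ[ℚ] E3 N :=
  linearCombination ℚ fun a => linearCombination ℚ fun b =>
    linearCombination ℚ fun c => e3 (a, b, c)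

noncomputable def mu3L : E3 N →ₗ[ℚ] E3 N →ₗ[ℚ] E3 N :=
  linearCombination ℚ fun u => linearCombination ℚ (mu3B u)

noncomputable def bd3L : E3 N →ₗ[ℚ] E3 N := linearCombination ℚ bd3B

lemma bd3_eq_bd3L (x : E3 N) : bd3 x = bd3L x := (linearCombination_apply ℚ x).symm

lemma mu3_eq_mu3L (x y : E3 N) : mu3 x y = mu3L x y := by
  simp only [mu3, mu3L, linearCombination_apply, LinearMap.finsupp_sum_apply,
    LinearMap.smul_apply, Finsupp.smul_sum, mul_smul]

lemma t3_eq_tensor3 (x y z : EC N) : t3 x y z = tensor3 x y z := by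
  simp only [t3, tensor3, linearCombination_apply, LinearMap.finsupp_sum_apply,
    LinearMap.smul_apply, Finsupp.smul_sum, e3, smul_single, smul_eq_mul, mul_one, mul_assoc]

@[simp] lemma bdL_single (a : B N) (r : ℚ) : bdL (single a r) = r • bdB a := by simp [bdL]

@[simp] lemma muL_single_single (a b : B N) (r s : ℚ) :
    muL (single a r) (single b s) = (r * s) • muB a b := by
  simp [muL, mul_smul]

@[simp] lemma bdL_e (a : B N) : bdL (e a) = bdB a := by simp [bdL, e]

@[simp] lemma muL_e_e (a b : B N) : muL (e a) (e b) = muB a b := by simp [muL, e]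

@[simp] lemma gradeInv_single (a : B N) (r : ℚ) :
    gradeInv (single a r) = (-1 : ℚ) ^ a.cod • single a r := by
  rw [gradeInv, linearCombination_single, smul_comm, e, smul_single_one]

@[simp] lemma gradeInv_e (a : B N) : gradeInv (e a) = (-1 : ℚ) ^ a.cod • e a := by
  simp [gradeInv, e]

@[simp] lemma tensor3_e (a b c : B N) : tensor3 (e a) (e b) (e c) = e3 (a, b, c) := by
  simp [tensor3, e]

@[simp] lemma mu3L_e3 (u v : B3 N) : mu3L (e3 u) (e3 v) = mu3B u v := by simp [mu3L, e3]

@[simp] lemma bd3L_e3 (u : B3 N) : bd3L (e3 u) = bd3B u := by simp [bd3L, e3]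

lemma single_eq_smul_e (a : B N) (r : ℚ) : single a r = r • e a := by simp [e]

lemma bd3L_tensor3 (x y z : EC N) :
    bd3L (tensor3 x y z) = tensor3 (bdL x) y z + tensor3 (gradeInv x) (bdL y) z
      + tensor3 (gradeInv x) (gradeInv y) (bdL z) := by
  induction x using Finsupp.induction_linear with
  | zero => simp
  | add x x' hx hx' => simp only [map_add, LinearMap.add_apply, hx, hx']; abel
  | single a r =>
  induction y using Finsupp.induction_linear with
  | zero => simp
  | add y y' hy hy' => simp only [map_add, LinearMap.add_apply, hy, hy']; abel
  | single b s =>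
  induction z using Finsupp.induction_linear with
  | zero => simp
  | add z z' hz hz' => simp only [map_add, hz, hz']; abel
  | single c t =>
  simp only [single_eq_smul_e, map_smul, LinearMap.smul_apply, tensor3_e, bd3L_e3, bd3B,
    t3_eq_tensor3, bdL_e, gradeInv_e, smul_add]
  module

lemma pow_apply_of_apply_eq_smul {R M : Type*} [Semiring R] [AddCommMonoid M] [Module R M]
    {f : Module.End R M} {x : M} {r : R} (h : f x = r • x) (k : ℕ) : (f ^ k) x = r ^ k • x := by
  induction k with
  | zero => simp
  | succ k ih => rw [pow_succ, Module.End.mul_apply, h, map_smul, ih, smul_smul, pow_succ']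

lemma gradeInv_pow_e (a : B N) (k : ℕ) :
    (gradeInv ^ k) (e a) = (-1 : ℚ) ^ (a.cod * k) • e a := by
  rw [pow_apply_of_apply_eq_smul (gradeInv_e a), pow_mul]

lemma gradeInv_bdB (a : B N) : gradeInv (bdB a) = (-1 : ℚ) ^ (a.cod + 1) • bdB a := by
  cases a <;> simp [bdB, cod, smul_sub]

lemma gradeInv_pow_bdB (a : B N) (k : ℕ) :
    (gradeInv ^ k) (bdB a) = (-1 : ℚ) ^ ((a.cod + 1) * k) • bdB a := by
  rw [pow_apply_of_apply_eq_smul (gradeInv_bdB a), pow_mul]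

lemma gradeInv_muB (a b : B N) :
    gradeInv (muB a b) = (-1 : ℚ) ^ (a.cod + b.cod) • muB a b := by
  cases a <;> cases b <;> simp only [muB] <;> try split_ifs
  all_goals simp [cod, smul_add]

lemma mu3L_tensor3_e3 (x y z : EC N) (b₁ b₂ b₃ : B N) :
    mu3L (tensor3 x y z) (e3 (b₁, b₂, b₃)) = tensor3 (muL x (e b₁))
      (muL ((gradeInv ^ b₁.cod) y) (e b₂)) (muL ((gradeInv ^ (b₁.cod + b₂.cod)) z) (e b₃)) := by
  induction x using Finsupp.induction_linear with
  | zero => simp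
  | add x x' hx hx' => simp only [map_add, LinearMap.add_apply, hx, hx']
  | single a₁ r =>
  induction y using Finsupp.induction_linear with
  | zero => simp
  | add y y' hy hy' => simp only [map_add, LinearMap.add_apply, hy, hy']
  | single a₂ s =>
  induction z using Finsupp.induction_linear with
  | zero => simp
  | add z z' hz hz' => simp only [map_add, LinearMap.add_apply, hz, hz']
  | single a₃ t =>
  simp only [single_eq_smul_e, map_smul, LinearMap.smul_apply, tensor3_e, mu3L_e3, mu3B,
    t3_eq_tensor3, gradeInv_pow_e, muL_e_e]
  module

lemma mu3L_e3_tensor3 (a₁ a₂ a₃ : B N) (x y z : EC N) :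
    mu3L (e3 (a₁, a₂, a₃)) (tensor3 x y z) =
      tensor3 (muL (e a₁) ((gradeInv ^ (a₂.cod + a₃.cod)) x)) (muL (e a₂) ((gradeInv ^ a₃.cod) y))
        (muL (e a₃) z) := by
  induction x using Finsupp.induction_linear with
  | zero => simp
  | add x x' hx hx' => simp only [map_add, LinearMap.add_apply, hx, hx']
  | single b₁ r =>
  induction y using Finsupp.induction_linear with
  | zero => simp
  | add y y' hy hy' => simp only [map_add, LinearMap.add_apply, hy, hy']
  | single b₂ s =>
  induction z using Finsupp.induction_linear with
  | zero => simp
  | add z z' hz hz' => simp only [map_add, hz, hz']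
  | single b₃ t =>
  simp only [single_eq_smul_e, map_smul, LinearMap.smul_apply, tensor3_e, mu3L_e3, mu3B,
    t3_eq_tensor3, gradeInv_pow_e, muL_e_e]
  module

def koszulSign (u v : B3 N) : ℚ :=
  (-1) ^ (u.2.1.cod * v.1.cod + u.2.2.cod * v.1.cod + u.2.2.cod * v.2.1.cod)

/-- `m₁ ⊗ m₂ ⊗ m₃` with `mᵢ = μ(uᵢ, vᵢ)`, summed over the ways of replacing one factor `mᵢ` by
`F uᵢ vᵢ`, with the sign of a degree-one operator moving past the factors before it. -/
noncomputable def slotwiseSum (F : B N → B N → EC N) (u v : B3 N) : E3 N :=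
  tensor3 (F u.1 v.1) (muB u.2.1 v.2.1) (muB u.2.2 v.2.2)
    + (-1 : ℚ) ^ (u.1.cod + v.1.cod) • tensor3 (muB u.1 v.1) (F u.2.1 v.2.1) (muB u.2.2 v.2.2)
    + (-1 : ℚ) ^ (u.1.cod + v.1.cod + u.2.1.cod + v.2.1.cod) •
        tensor3 (muB u.1 v.1) (muB u.2.1 v.2.1) (F u.2.2 v.2.2)

lemma slotwiseSum_sub (F G : B N → B N → EC N) (u v : B3 N) :
    slotwiseSum (fun a b => F a b - G a b) u v = slotwiseSum F u v - slotwiseSum G u v := by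
  simp only [slotwiseSum, map_sub, LinearMap.sub_apply, smul_sub]
  abel

lemma bd3L_mu3B (u v : B3 N) :
    bd3L (mu3B u v) = koszulSign u v • slotwiseSum (fun a b => bdL (muB a b)) u v := by
  simp only [mu3B, t3_eq_tensor3, map_smul, bd3L_tensor3, gradeInv_muB, LinearMap.smul_apply,
    slotwiseSum, koszulSign]
  module

lemma mu3L_bd3B_e3 (u v : B3 N) :
    mu3L (bd3B u) (e3 v) = koszulSign u v • slotwiseSum (fun a b => muL (bdB a) (e b)) u v := by
  obtain ⟨a₁, a₂, a₃⟩ := u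
  obtain ⟨b₁, b₂, b₃⟩ := v
  simp only [bd3B, t3_eq_tensor3, map_add, map_smul, LinearMap.add_apply, LinearMap.smul_apply,
    mu3L_tensor3_e3, gradeInv_pow_e, gradeInv_pow_bdB, muL_e_e, slotwiseSum, koszulSign]
  module

lemma neg_one_pow_cod3_smul_mu3L_e3_bd3B (u v : B3 N) :
    (-1 : ℚ) ^ cod3 u • mu3L (e3 u) (bd3B v)
      = koszulSign u v • slotwiseSum (fun a b => (-1 : ℚ) ^ a.cod • muL (e a) (bdB b)) u v := by
  obtain ⟨a₁, a₂, a₃⟩ := u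
  obtain ⟨b₁, b₂, b₃⟩ := v
  simp only [bd3B, t3_eq_tensor3, map_add, map_smul, LinearMap.smul_apply,
    mu3L_e3_tensor3, gradeInv_pow_e, gradeInv_pow_bdB, muL_e_e, slotwiseSum, koszulSign, cod3]
  -- the coefficients agree only up to factors `(-1) ^ (2 * k)`
  match_scalars <;> ring_nf <;> simp only [pow_mul', neg_one_sq, one_pow, mul_one]

noncomputable def leibnizDefect (a b : B N) : EC N :=
  bdL (muB a b) - muL (bdB a) (e b) - (-1 : ℚ) ^ a.cod • muL (e a) (bdB b)

lemma bd3L_mu3B_sub (u v : B3 N) :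
    bd3L (mu3B u v) - (mu3L (bd3B u) (e3 v) + (-1 : ℚ) ^ cod3 u • mu3L (e3 u) (bd3B v))
      = koszulSign u v • slotwiseSum leibnizDefect u v := by
  rw [bd3L_mu3B, mu3L_bd3B_e3, neg_one_pow_cod3_smul_mu3L_e3_bd3B]
  unfold leibnizDefect
  rw [slotwiseSum_sub, slotwiseSum_sub]
  module

lemma leibnizDefect_P_left (x : ZMod N) (b : B N) : leibnizDefect (P x) b = 0 := by
  cases b <;> simp only [leibnizDefect, muB, bdB] <;> try split_ifs
  all_goals simp [e, bdB, muB]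

lemma leibnizDefect_P_right (a : B N) (y : ZMod N) : leibnizDefect a (P y) = 0 := by
  cases a <;> simp only [leibnizDefect, muB, bdB] <;> try split_ifs
  all_goals simp [e, bdB, muB]

lemma leibnizDefect_I_I (x y : ZMod N) : leibnizDefect (I x) (I y) = 0 := by
  simp only [leibnizDefect, muB]; split_ifs <;> simp [bdB]

lemma muB_S_P (b p : ZMod N) : muB (S b) (P p) = muB (P p) (S b) := rfl

lemma muB_P_add_one_S_sub_muB_P_S (x y : ZMod N) :
    muB (P (x + 1)) (S y) - muB (P y) (S x) =
      if y = x then (1 / 2 : ℚ) • bdB (S x) else 0 := by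
  -- `x + 1` bounds `[y, y + 1]` iff `y` bounds `[x, x + 1]`; for `y = x + 1` the terms cancel
  have hiff : (x = y ∨ x = y - 1) ↔ (y = x + 1 ∨ y = x + 1 - 1) := by
    rw [add_sub_cancel_right, eq_sub_iff_add_eq]; tauto
  simp only [muB, hiff]
  by_cases hyx : y = x
  · subst hyx; simp [bdB, smul_sub]
  by_cases hyx' : y = x + 1
  · subst hyx'; rw [if_neg hyx]; simp
  simp [hyx, hyx']

lemma leibnizDefect_S_S (x y : ZMod N) : leibnizDefect (S x) (S y) = 0 := by
  have hbd : bdL (muB (S x) (S y)) = if y = x then bdB (S x) else 0 := by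
    simp only [muB]; split_ifs <;> simp [bdB]
  have hL : muL (bdB (S x)) (e (S y)) = muB (P (x + 1)) (S y) - muB (P x) (S y) := by
    simp [bdB, e]
  have hR : muL (e (S x)) (bdB (S y)) = muB (P (y + 1)) (S x) - muB (P y) (S x) := by
    simp [bdB, e, muB_S_P]
  have h₁ := muB_P_add_one_S_sub_muB_P_S x y
  have h₂ := muB_P_add_one_S_sub_muB_P_S y x
  rw [leibnizDefect, hbd, hL, hR, show (S x).cod = 0 from rfl, pow_zero, one_smul]
  by_cases hyx : y = x
  · subst hyx; simp only [if_true] at h₁ h₂ ⊢; linear_combination (norm := module) -h₁ - h₂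
  · rw [if_neg hyx] at h₁ ⊢; rw [if_neg (Ne.symm hyx)] at h₂
    linear_combination (norm := module) -h₁ - h₂

lemma inFC_swap {a b c : B N} (h : inFC (a, b, c)) : inFC (b, a, c) := by
  unfold inFC nI nP at *; dsimp only at *; omega

lemma inFC_rotate {a b c : B N} (h : inFC (a, b, c)) : inFC (c, a, b) := by
  unfold inFC nI nP at *; dsimp only at *; omega

lemma inFC_I_fst {x : ZMod N} {y z : B N} (h : inFC (I x, y, z)) : isP y ∧ isP z := by
  cases y <;> cases z <;> simp_all [inFC, nI, nP, isI, isP]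

lemma inFC_S_fst {x : ZMod N} {y z : B N} (h : inFC (S x, y, z)) : isP y ∨ isP z := by
  cases y <;> cases z <;> simp_all [inFC, nI, nP, isI, isP]

lemma muB_eq_zero_of_isP {a b : B N} (ha : isP a) (hb : isP b) : muB a b = 0 := by
  cases a <;> cases b <;> simp_all [isP, muB]

lemma leibnizDefect_eq_zero_or {a b y y' z z' : B N} (hu : inFC (a, y, z))
    (hv : inFC (b, y', z')) :
    leibnizDefect a b = 0 ∨ muB y y' = 0 ∨ muB z z' = 0 := by
  cases a with
  | P x => exact .inl (leibnizDefect_P_left x b)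
  | S x =>
    cases b with
    | P y => exact .inl (leibnizDefect_P_right _ y)
    | S y => exact .inl (leibnizDefect_S_S x y)
    | I _ =>
      obtain ⟨hy', hz'⟩ := inFC_I_fst hv
      exact .inr ((inFC_S_fst hu).imp (muB_eq_zero_of_isP · hy') (muB_eq_zero_of_isP · hz'))
  | I x =>
    cases b with
    | P y => exact .inl (leibnizDefect_P_right _ y)
    | S _ =>
      obtain ⟨hy, hz⟩ := inFC_I_fst hu
      exact .inr ((inFC_S_fst hv).imp (muB_eq_zero_of_isP hy ·) (muB_eq_zero_of_isP hz ·))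
    | I y => exact .inl (leibnizDefect_I_I x y)

lemma slotwiseSum_leibnizDefect_eq_zero {u v : B3 N} (hu : inFC u) (hv : inFC v) :
    slotwiseSum leibnizDefect u v = 0 := by
  obtain ⟨a₁, a₂, a₃⟩ := u
  obtain ⟨b₁, b₂, b₃⟩ := v
  have h₁ := leibnizDefect_eq_zero_or hu hv
  have h₂ := leibnizDefect_eq_zero_or (inFC_swap hu) (inFC_swap hv)
  have h₃ := leibnizDefect_eq_zero_or (inFC_rotate hu) (inFC_rotate hv)
  have t₁ : tensor3 (leibnizDefect a₁ b₁) (muB a₂ b₂) (muB a₃ b₃) = 0 := by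
    rcases h₁ with h | h | h <;> simp [h]
  have t₂ : tensor3 (muB a₁ b₁) (leibnizDefect a₂ b₂) (muB a₃ b₃) = 0 := by
    rcases h₂ with h | h | h <;> simp [h]
  have t₃ : tensor3 (muB a₁ b₁) (muB a₂ b₂) (leibnizDefect a₃ b₃) = 0 := by
    rcases h₃ with h | h | h <;> simp [h]
  simp [slotwiseSum, t₁, t₂, t₃]

end Leibniz

theorem leibniz_on_FC_general (N : ℕ) :
    ∀ u v : B3 N, inFC u → inFC v →
      bd3 (mu3 (e3 u) (e3 v))
        = mu3 (bd3 (e3 u)) (e3 v) + ((-1 : ℚ) ^ cod3 u) • mu3 (e3 u) (bd3 (e3 v)) := by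
  intro u v hu hv
  simp only [bd3_eq_bd3L, mu3_eq_mu3L, mu3L_e3, bd3L_e3]
  rw [← sub_eq_zero, bd3L_mu3B_sub, slotwiseSum_leibnizDefect_eq_zero hu hv, smul_zero]

/-- on the subcomplex `FC_N` the Leibniz product rule holds without
reservation. -/
theorem leibniz_on_FC (N : ℕ) (hN : 3 ≤ N) :
    ∀ u v : B3 N, inFC u → inFC v →
      bd3 (mu3 (e3 u) (e3 v))
        = mu3 (bd3 (e3 u)) (e3 v) + ((-1 : ℚ) ^ cod3 u) • mu3 (e3 u) (bd3 (e3 v)) :=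
  leibniz_on_FC_general N
end
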